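/- Let $T>0$ and let $a_0, b_0 \ge 0$, $\psi_0 > 0$ and $\rho \in \mathbb{R}$ satisfy $\rho > a_0^2 + 2b_0 + 2\psi_0/T$. Let $\psi : [0,T] \to [0,\infty)$ be absolutely continuous with $\psi(0) = \psi_0$ and $\psi'(t) + \rho \le a_0 \rho^{1/2} + b_0$ for a.e. $t$ in $P = \{t \in (0,T) : \psi(t) > 0\}$. Then there exists $T^* \in (0,T)$ with $T^* \le 2\psi_0/(\rho - a_0^2 - 2b_0)$ such that $\psi$ is strictly decreasing on $(0,T^*)$ and $\psi$ vanishes on $[T^*, T]$. -/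
import Mathlib


open MeasureTheory Set

theorem stmt_1 (T a0 b0 ψ0 ρ : ℝ) (ψ ψ' : ℝ → ℝ)
    (hT : 0 < T) (ha0 : 0 ≤ a0) (hb0 : 0 ≤ b0) (hψ0 : 0 < ψ0)
    (hρ : a0 ^ 2 + 2 * b0 + 2 * ψ0 / T < ρ)
    (hnn : ∀ t ∈ Icc (0 : ℝ) T, 0 ≤ ψ t)
    (hint : IntervalIntegrable ψ' volume 0 T)
    (hFTC : ∀ s ∈ Icc (0 : ℝ) T, ∀ t ∈ Icc (0 : ℝ) T,
      ψ t - ψ s = ∫ u in s..t, ψ' u)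
    (hinit : ψ 0 = ψ0)
    (hineq : ∀ᵐ t ∂(volume.restrict {t : ℝ | t ∈ Ioo 0 T ∧ 0 < ψ t}),
      ψ' t + ρ ≤ a0 * Real.sqrt ρ + b0) :
    ∃ Tstar ∈ Ioo (0 : ℝ) T,
      Tstar ≤ 2 * ψ0 / (ρ - a0 ^ 2 - 2 * b0) ∧
      StrictAntiOn ψ (Ioo 0 Tstar) ∧
      ∀ t ∈ Icc Tstar T, ψ t = 0 := by
  set c : ℝ := ρ - a0 ^ 2 - 2 * b0 with hc_def
  set P : Set ℝ := {t : ℝ | t ∈ Ioo 0 T ∧ 0 < ψ t} with hP_def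
  have h2ψ0T : 0 < 2 * ψ0 / T := by positivity
  have hcT : 2 * ψ0 / T < c := by rw [hc_def]; linarith
  have hc : 0 < c := lt_trans h2ψ0T hcT
  have hcT2 : 2 * ψ0 < c * T := by
    have := (div_lt_iff₀ hT).mp hcT; linarith
  have hρ0 : (0 : ℝ) ≤ ρ := by nlinarith [sq_nonneg a0]
  have hC : a0 * Real.sqrt ρ + b0 - ρ ≤ -(c / 2) := by
    nlinarith [sq_nonneg (a0 - Real.sqrt ρ), Real.sq_sqrt hρ0]
  -- the key decrement estimate
  have key : ∀ s t : ℝ, 0 ≤ s → s ≤ t → t ≤ T → Ioo s t ⊆ P →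
      ψ t - ψ s ≤ -(c / 2) * (t - s) := by
    intro s t hs hst htT hsub
    have hsI : s ∈ Icc (0 : ℝ) T := ⟨hs, hst.trans htT⟩
    have htI : t ∈ Icc (0 : ℝ) T := ⟨hs.trans hst, htT⟩
    rw [hFTC s hsI t htI]
    have hii : IntervalIntegrable ψ' volume s t := by
      apply hint.mono_set
      rw [uIcc_of_le hst, uIcc_of_le hT.le]
      exact Icc_subset_Icc hs htT
    have hae : ψ' ≤ᵐ[volume.restrict (Icc s t)]
        fun _ => a0 * Real.sqrt ρ + b0 - ρ := by
      rw [← Measure.restrict_congr_set Ioo_ae_eq_Icc]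
      have := hineq.filter_mono (ae_mono (Measure.restrict_mono hsub le_rfl))
      filter_upwards [this] with x hx
      show ψ' x ≤ a0 * Real.sqrt ρ + b0 - ρ
      linarith
    calc ∫ u in s..t, ψ' u
        ≤ ∫ _ in s..t, (a0 * Real.sqrt ρ + b0 - ρ) :=
          intervalIntegral.integral_mono_ae_restrict hst hii
            intervalIntegrable_const hae
      _ = (a0 * Real.sqrt ρ + b0 - ρ) * (t - s) := by
          rw [intervalIntegral.integral_const, smul_eq_mul]; ring
      _ ≤ -(c / 2) * (t - s) :=
          mul_le_mul_of_nonneg_right hC (by linarith)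
  -- continuity of ψ on [0,T]
  have hψcont : ContinuousOn ψ (Icc 0 T) := by
    have h0 : (0 : ℝ) ∈ uIcc (0 : ℝ) T := left_mem_uIcc
    have h1 := intervalIntegral.continuousOn_primitive_interval' hint h0
    rw [uIcc_of_le hT.le] at h1
    have h2 : ContinuousOn (fun x => ψ0 + ∫ u in (0 : ℝ)..x, ψ' u) (Icc 0 T) :=
      continuousOn_const.add h1
    apply h2.congr
    intro x hx
    have := hFTC 0 ⟨le_rfl, hT.le⟩ x hx
    rw [hinit] at this
    show ψ x = ψ0 + ∫ u in (0:ℝ)..x, ψ' u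
    linarith
  -- the zero set
  set Z : Set ℝ := Icc 0 T ∩ ψ ⁻¹' {0} with hZ_def
  have hZclosed : IsClosed Z :=
    hψcont.preimage_isClosed_of_isClosed isClosed_Icc isClosed_singleton
  have hZne : Z.Nonempty := by
    by_contra hne
    rw [not_nonempty_iff_eq_empty] at hne
    have hposAll : ∀ u ∈ Icc (0 : ℝ) T, 0 < ψ u := by
      intro u hu
      rcases lt_or_eq_of_le (hnn u hu) with h | h
      · exact h
      · exact absurd (by simp [hZ_def, hu, ← h] : u ∈ Z) (by simp [hne])
    have hsub : Ioo (0 : ℝ) T ⊆ P := by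
      intro u hu
      exact ⟨hu, hposAll u ⟨hu.1.le, hu.2.le⟩⟩
    have := key 0 T le_rfl hT.le le_rfl hsub
    rw [hinit] at this
    have hψT := hnn T ⟨hT.le, le_rfl⟩
    nlinarith
  have hZbdd : BddBelow Z := ⟨0, fun u hu => hu.1.1⟩
  set Tstar := sInf Z with hTstar_def
  have hTmem : Tstar ∈ Z := hZclosed.csInf_mem hZne hZbdd
  have hTstar0 : 0 ≤ Tstar := hTmem.1.1
  have hTstarT : Tstar ≤ T := hTmem.1.2
  have hψTstar : ψ Tstar = 0 := hTmem.2
  have hpos : ∀ u, 0 ≤ u → u < Tstar → 0 < ψ u := by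
    intro u hu hu'
    have huI : u ∈ Icc (0 : ℝ) T := ⟨hu, hu'.le.trans hTstarT⟩
    rcases lt_or_eq_of_le (hnn u huI) with h | h
    · exact h
    · exact absurd (csInf_le hZbdd ⟨huI, by simp [← h]⟩) (not_le.mpr hu')
  have hTstarpos : 0 < Tstar := by
    rcases lt_or_eq_of_le hTstar0 with h | h
    · exact h
    · rw [← h] at hψTstar; rw [hinit] at hψTstar; linarith
  have hsub0 : Ioo 0 Tstar ⊆ P := fun u hu =>
    ⟨⟨hu.1, lt_of_lt_of_le hu.2 hTstarT⟩, hpos u hu.1.le hu.2⟩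
  have hdecr := key 0 Tstar le_rfl hTstar0 hTstarT hsub0
  rw [hinit, hψTstar] at hdecr
  have hTle : Tstar ≤ 2 * ψ0 / c := by
    rw [le_div_iff₀ hc]; nlinarith
  have hTstarltT : Tstar < T := by
    have : 2 * ψ0 / c < T := (div_lt_iff₀ hc).mpr (by linarith)
    linarith
  refine ⟨Tstar, ⟨hTstarpos, hTstarltT⟩, hTle, ?_, ?_⟩
  · -- strict antitonicity
    intro s hs t ht hst
    have hsub : Ioo s t ⊆ P := fun u hu =>
      ⟨⟨hs.1.trans hu.1, lt_of_lt_of_le (hu.2.trans ht.2) hTstarT⟩,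
        hpos u (hs.1.trans hu.1).le (hu.2.trans ht.2)⟩
    have := key s t hs.1.le hst.le (ht.2.le.trans hTstarT) hsub
    nlinarith
  · -- vanishing on [Tstar, T]
    intro t ht
    have htI : t ∈ Icc (0 : ℝ) T := ⟨hTstar0.trans ht.1, ht.2⟩
    rcases lt_or_eq_of_le (hnn t htI) with hψt | hψt
    · exfalso
      set W : Set ℝ := Icc Tstar t ∩ Z with hW_def
      have hWclosed : IsClosed W := isClosed_Icc.inter hZclosed
      have hWne : W.Nonempty := ⟨Tstar, ⟨le_rfl, ht.1⟩, hTmem⟩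
      have hWbdd : BddAbove W := ⟨t, fun u hu => hu.1.2⟩
      set s' := sSup W with hs'_def
      have hs'mem : s' ∈ W := hWclosed.csSup_mem hWne hWbdd
      have hψs' : ψ s' = 0 := hs'mem.2.2
      have hs'lt : s' < t := by
        rcases lt_or_eq_of_le hs'mem.1.2 with h | h
        · exact h
        · rw [h] at hψs'; rw [hψs'] at hψt; exact absurd hψt (lt_irrefl 0)
      have hsub : Ioo s' t ⊆ P := by
        intro u hu
        have hu0 : 0 < u := lt_of_lt_of_le hTstarpos (hs'mem.1.1.trans hu.1.le)
        have huT : u < T := lt_of_lt_of_le hu.2 ht.2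
        have huI : u ∈ Icc (0 : ℝ) T := ⟨hu0.le, huT.le⟩
        refine ⟨⟨hu0, huT⟩, ?_⟩
        rcases lt_or_eq_of_le (hnn u huI) with h | h
        · exact h
        · exfalso
          have huW : u ∈ W :=
            ⟨⟨hs'mem.1.1.trans hu.1.le, hu.2.le⟩, huI, by simp [← h]⟩
          exact absurd (le_csSup hWbdd huW) (not_le.mpr hu.1)
      have := key s' t (hTstar0.trans hs'mem.1.1) hs'lt.le ht.2 hsub
      rw [hψs'] at this
      nlinarith
    · exact hψt.symm
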